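/- Let Σ_S1 and Σ_S2 be the LSSs associated with two SISO SARX systems S1 = {h_q}, S2 = {g_q} of type (n_y, n_u), with n = n_y + n_u, and suppose for some mode q either h_q^{n_y} ≠ 0 or h_q^{n_y+n_u} ≠ 0. If S is an invertible matrix with S A_q = A'_q S, S B_q = B'_q, and C'_q S = C_q for all modes q (an LSS isomorphism), then S is the identity matrix. -/

import Mathlib

/-- The companion-like matrix of a SISO (S)ARX system of type `(ny, nu)` with coefficient
row `h` (0-based indexing: `h i` corresponds to `h^{i+1}` in the paper):
`A e_j = h^j e_1 + e_{j+1}` for `j ∈ {1,...,n-1} \ {n_y}`, `A e_{n_y} = h^{n_y} e_1`,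
`A e_n = h^n e_1`, where `n = n_y + n_u`. -/
def sarxCompanion (ny nu : ℕ) (h : Fin (ny + nu) → ℝ) :
    Matrix (Fin (ny + nu)) (Fin (ny + nu)) ℝ :=
  Matrix.of fun i k =>
    (if (i : ℕ) = 0 then h k else 0) +
    (if (i : ℕ) = (k : ℕ) + 1 ∧ (k : ℕ) + 1 ≠ ny then 1 else 0)

/-- The subspace `X1 = span{e_1, ..., e_{n_y}}`. -/
def sarxX1 (ny nu : ℕ) : Submodule ℝ (Fin (ny + nu) → ℝ) :=
  Submodule.span ℝ {v : Fin (ny + nu) → ℝ | ∃ i : Fin (ny + nu), (i : ℕ) < ny ∧ v = Pi.single i 1}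

/-! Write `A_h = e₀ hᵀ + N`, where the shift part `N` (`sarxShift`) does not depend on the
coefficients and is strictly lower triangular. The output condition gives `gᵀ S = hᵀ`, after which
the state condition becomes `(S - 1) A_h = N (S - 1)`: each row of `(S - 1) A_h` is a combination
of earlier rows of `S - 1`. The input condition kills the column of `S - 1` at the position of `B`,
and `h^{n_y} ≠ 0` or `h^n ≠ 0` ensures that no nonzero row vector vanishing there is
left-annihilated by `A_h`. Induction on the row index then gives `S = 1`. -/

section SARX

open Matrix

theorem Matrix.eq_zero_of_mul_eq_strictLowerTriangular_mul {n R : Type*} [Fintype n]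
    [LinearOrder n] [WellFoundedLT n] [Semiring R] {T A N : Matrix n n R}
    (hN : ∀ i j, i ≤ j → N i j = 0) (hTA : T * A = N * T)
    (hker : ∀ i, T i ᵥ* A = 0 → T i = 0) : T = 0 := by
  suffices ∀ i, T i = 0 from funext this
  intro i
  induction i using WellFoundedLT.induction with
  | _ i ih =>
    apply hker
    rw [← mul_apply_eq_vecMul, hTA, mul_apply_eq_vecMul, vecMul_eq_sum]
    refine Finset.sum_eq_zero fun j _ => ?_
    rcases lt_or_ge j i with hji | hij
    · rw [ih j hji, smul_zero]
    · rw [hN i j hij, zero_smul]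

def sarxShift (ny nu : ℕ) : Matrix (Fin (ny + nu)) (Fin (ny + nu)) ℝ :=
  Matrix.of fun i k => if (i : ℕ) = (k : ℕ) + 1 ∧ (k : ℕ) + 1 ≠ ny then 1 else 0

variable {ny nu : ℕ}

theorem sarxShift_eq_zero_of_le {i k : Fin (ny + nu)} (hik : i ≤ k) :
    sarxShift ny nu i k = 0 := by
  have : (i : ℕ) ≠ k + 1 := by omega
  simp [sarxShift, this]

theorem vecMul_sarxShift_eq_zero (w : Fin (ny + nu) → ℝ) {k : Fin (ny + nu)}
    (hk : (k : ℕ) + 1 = ny ∨ (k : ℕ) + 1 = ny + nu) : (w ᵥ* sarxShift ny nu) k = 0 := by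
  simp only [vecMul, dotProduct]
  refine Finset.sum_eq_zero fun i _ => ?_
  have : ¬((i : ℕ) = k + 1 ∧ (k : ℕ) + 1 ≠ ny) := by omega
  simp [sarxShift, this]

theorem vecMul_sarxShift_pred (w : Fin (ny + nu) → ℝ) {j : Fin (ny + nu)} (hj0 : (j : ℕ) ≠ 0)
    (hjny : (j : ℕ) ≠ ny) : (w ᵥ* sarxShift ny nu) ⟨j - 1, by omega⟩ = w j := by
  rw [vecMul, dotProduct, Finset.sum_eq_single j]
  · simp [sarxShift]
    omega
  · intro i _ hij
    have : ¬((i : ℕ) = j - 1 + 1 ∧ (j : ℕ) - 1 + 1 ≠ ny) := by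
      rintro ⟨hi, -⟩
      exact hij (Fin.ext (by omega))
    simp [sarxShift, this]
  · simp

variable [NeZero (ny + nu)]

theorem sarxCompanion_eq_vecMulVec_add_sarxShift (h : Fin (ny + nu) → ℝ) :
    sarxCompanion ny nu h = vecMulVec (Pi.single 0 1) h + sarxShift ny nu := by
  ext i k
  rw [Matrix.add_apply, vecMulVec_apply]
  rcases eq_or_ne i 0 with rfl | hi
  · simp [sarxCompanion, sarxShift]
  · simp [sarxCompanion, sarxShift, hi]

theorem sarxCompanion_row_zero (h : Fin (ny + nu) → ℝ) : (sarxCompanion ny nu h).row 0 = h := by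
  ext k
  simp [row, sarxCompanion]

theorem vecMul_sarxCompanion (h w : Fin (ny + nu) → ℝ) :
    w ᵥ* sarxCompanion ny nu h = w 0 • h + w ᵥ* sarxShift ny nu := by
  rw [sarxCompanion_eq_vecMulVec_add_sarxShift, vecMul_add, vecMul_vecMulVec, dotProduct_single,
    mul_one]

theorem sub_one_mul_sarxCompanion {h g : Fin (ny + nu) → ℝ}
    {S : Matrix (Fin (ny + nu)) (Fin (ny + nu)) ℝ}
    (hA : S * sarxCompanion ny nu h = sarxCompanion ny nu g * S) (hC : g ᵥ* S = h) :
    (S - 1) * sarxCompanion ny nu h = sarxShift ny nu * (S - 1) := by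
  calc (S - 1) * sarxCompanion ny nu h = sarxCompanion ny nu g * S - sarxCompanion ny nu h := by
        rw [sub_mul, one_mul, hA]
    _ = vecMulVec (Pi.single 0 1) (g ᵥ* S) + sarxShift ny nu * S
          - (vecMulVec (Pi.single 0 1) h + sarxShift ny nu) := by
        rw [sarxCompanion_eq_vecMulVec_add_sarxShift, sarxCompanion_eq_vecMulVec_add_sarxShift,
          add_mul, vecMulVec_mul]
    _ = sarxShift ny nu * (S - 1) := by
        rw [hC, mul_sub, mul_one]
        abel

theorem eq_zero_of_vecMul_sarxCompanion_eq_zero (hny : 1 ≤ ny) (hnu : 1 ≤ nu)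
    {h w : Fin (ny + nu) → ℝ}
    (hh : h ⟨ny - 1, Nat.sub_lt_of_lt (Nat.lt_add_of_pos_right hnu)⟩ ≠ 0 ∨
      h ⟨ny + nu - 1, Nat.sub_one_lt_of_lt (Nat.lt_add_of_pos_right hnu)⟩ ≠ 0)
    (hw : w ᵥ* sarxCompanion ny nu h = 0) (hwny : w ⟨ny, Nat.lt_add_of_pos_right hnu⟩ = 0) :
    w = 0 := by
  have hwk : ∀ k, w 0 * h k + (w ᵥ* sarxShift ny nu) k = 0 := fun k => by
    simpa [vecMul_sarxCompanion] using congrFun hw k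
  have hw0 : w 0 = 0 := by
    rcases hh with hh | hh
    · have := hwk ⟨ny - 1, by omega⟩
      rw [vecMul_sarxShift_eq_zero w (.inl (by simp; omega)), add_zero] at this
      exact (mul_eq_zero.mp this).resolve_right hh
    · have := hwk ⟨ny + nu - 1, by omega⟩
      rw [vecMul_sarxShift_eq_zero w (.inr (by simp; omega)), add_zero] at this
      exact (mul_eq_zero.mp this).resolve_right hh
  funext j
  by_cases hj0 : (j : ℕ) = 0
  · rw [show j = 0 from Fin.ext hj0, hw0, Pi.zero_apply]
  by_cases hjny : (j : ℕ) = ny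
  · rw [show j = ⟨ny, by omega⟩ from Fin.ext hjny, hwny, Pi.zero_apply]
  simpa [hw0, vecMul_sarxShift_pred w hj0 hjny] using hwk ⟨j - 1, by omega⟩

end SARX

/-- If `S` is an LSS isomorphism between the LSSs associated with two SISO SARX
systems `{h_q}`, `{g_q}` of type `(n_y, n_u)` (`S A_q = A'_q S`, `S B_q = B'_q`, `C'_q S = C_q`),
and for some mode `q` either `h_q^{n_y} ≠ 0` or `h_q^{n_y+n_u} ≠ 0`, then `S` is the identity.
Here `A_q` is the companion matrix of `h_q`, `B_q = e_{n_y+1}` and `C_q = e_1ᵀ A_q`. -/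
theorem stmt15 (ny nu : ℕ) (hny : 1 ≤ ny) (hnu : 1 ≤ nu) (Q : Type)
    (hq gq : Q → Fin (ny + nu) → ℝ)
    (hnz : ∃ q, hq q ⟨ny - 1, by omega⟩ ≠ 0 ∨ hq q ⟨ny + nu - 1, by omega⟩ ≠ 0)
    (S : Matrix (Fin (ny + nu)) (Fin (ny + nu)) ℝ)
    (hA : ∀ q, S * sarxCompanion ny nu (hq q) = sarxCompanion ny nu (gq q) * S)
    (hB : S.mulVec (Pi.single (⟨ny, by omega⟩ : Fin (ny + nu)) 1) =
      Pi.single (⟨ny, by omega⟩ : Fin (ny + nu)) 1)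
    (hC : ∀ q, Matrix.vecMul
        (Matrix.vecMul (Pi.single (⟨0, by omega⟩ : Fin (ny + nu)) 1)
          (sarxCompanion ny nu (gq q))) S =
      Matrix.vecMul (Pi.single (⟨0, by omega⟩ : Fin (ny + nu)) 1)
        (sarxCompanion ny nu (hq q))) :
    S = 1 := by
  have : NeZero (ny + nu) := ⟨by omega⟩
  obtain ⟨q, hq0⟩ := hnz
  have hrow : Matrix.vecMul (gq q) S = hq q := by
    simpa only [Fin.mk_zero', Matrix.single_one_vecMul, sarxCompanion_row_zero] using hC q
  have hcol : ∀ i, (S - 1) i ⟨ny, by omega⟩ = 0 := fun i => by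
    simpa [Matrix.mulVec_single_one, sub_eq_zero, Matrix.one_apply, Pi.single_apply] using
      congrFun hB i
  rw [← sub_eq_zero]
  exact Matrix.eq_zero_of_mul_eq_strictLowerTriangular_mul (fun _ _ => sarxShift_eq_zero_of_le)
    (sub_one_mul_sarxCompanion (hA q) hrow) fun i hi =>
      eq_zero_of_vecMul_sarxCompanion_eq_zero hny hnu hq0 hi (hcol i)
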